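/- Let A be an n×n complex matrix with rows R_1, …, R_n, and for each 1 ≤ i ≤ n let R_{−i} := span{R_j : j ≠ i} be the vector space spanned by the other rows, and dist(R_i, R_{−i}) the Euclidean distance from R_i to R_{−i}. Then n^{-1/2} min_{1≤i≤n} dist(R_i, R_{−i}) ≤ s_n(A) ≤ min_{1≤i≤n} dist(R_i, R_{−i}). -/

import Mathlib

open MeasureTheory Filter Matrix Topology

noncomputable section

/-- Unsorted singular values of `A`: the square roots of the eigenvalues of `A * Aᴴ`. -/
noncomputable def singVals {n : ℕ} (A : Matrix (Fin n) (Fin n) ℂ) : Fin n → ℝ :=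
  fun i => Real.sqrt ((Matrix.isHermitian_mul_conjTranspose_self A).eigenvalues i)

/-- The singular values of `A` sorted in nonincreasing order. -/
noncomputable def sdesc {n : ℕ} (A : Matrix (Fin n) (Fin n) ℂ) : Fin n → ℝ :=
  fun i => (singVals A ∘ Tuple.sort (singVals A)) i.rev

/-- `sv A k` is the `(k+1)`-th largest singular value `s_{k+1}(A)` of `A`
(0-based indexing: `sv A 0 = s₁(A)`, …, `sv A (n-1) = sₙ(A)`), junk value `0` out of range. -/
noncomputable def sv {n : ℕ} (A : Matrix (Fin n) (Fin n) ℂ) (k : ℕ) : ℝ :=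
  if h : k < n then sdesc A ⟨k, h⟩ else 0

/-- The `i`-th row of `A`, as a vector of the Euclidean space `ℂⁿ`. -/
def rowE {n : ℕ} (A : Matrix (Fin n) (Fin n) ℂ) (i : Fin n) : EuclideanSpace ℂ (Fin n) :=
  (EuclideanSpace.equiv (Fin n) ℂ).symm (A i)

/-- The Euclidean distance from the row `Rᵢ` of `A` to the span of the other rows. -/
def distRow {n : ℕ} (A : Matrix (Fin n) (Fin n) ℂ) (i : Fin n) : ℝ :=
  Metric.infDist (rowE A i)
    (Submodule.span ℂ (rowE A '' {j : Fin n | j ≠ i}) : Set (EuclideanSpace ℂ (Fin n)))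

/-!
With `H = A Aᴴ`, `sₙ(A)² = λ_min(H)` and `‖Aᴴ x‖² = re ⟪x, H x⟫`, so `sₙ(A) = min_{‖x‖ = 1} ‖Aᴴ x‖`;
and `Aᴴ x` is, up to entrywise conjugation, the row combination `∑ⱼ x̄ⱼ Rⱼ`. Any row combination
`∑ⱼ cⱼ Rⱼ` has norm at least `|cᵢ| dist(Rᵢ, R₋ᵢ)` for every `i`, so a unit minimiser `x` and a
coordinate with `|xᵢ| ≥ n^{-1/2}` give the lower bound. Conversely, the point of `R₋ᵢ` nearest to
`Rᵢ` writes `Rᵢ - y` as a row combination whose `i`-th coefficient is `1`, so its coefficient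
vector has norm at least `1`, which gives the upper bound.
-/

open Metric

theorem norm_mul_infDist_span_le_norm_sum_smul {𝕜 E ι : Type*} [NormedField 𝕜]
    [NormedAddCommGroup E] [NormedSpace 𝕜 E] [Fintype ι] (v : ι → E) (c : ι → 𝕜) (i : ι) :
    ‖c i‖ * infDist (v i) (Submodule.span 𝕜 (v '' {j | j ≠ i})) ≤ ‖∑ j, c j • v j‖ := by
  classical
  set S := Submodule.span 𝕜 (v '' {j | j ≠ i})
  set w := ∑ j ∈ Finset.univ.erase i, c j • v j
  have hw : w ∈ S := Submodule.sum_mem _ fun j hj =>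
    S.smul_mem _ (Submodule.subset_span ⟨j, Finset.ne_of_mem_erase hj, rfl⟩)
  have hsum : ∑ j, c j • v j = c i • v i + w :=
    (Finset.add_sum_erase _ _ (Finset.mem_univ i)).symm
  rcases eq_or_ne (c i) 0 with hci | hci
  · simp [hci]
  calc ‖c i‖ * infDist (v i) S ≤ ‖c i‖ * dist (v i) (-(c i)⁻¹ • w) :=
        mul_le_mul_of_nonneg_left (infDist_le_dist_of_mem (S.smul_mem _ hw)) (norm_nonneg _)
    _ = ‖∑ j, c j • v j‖ := by
        rw [hsum, dist_eq_norm, ← norm_smul, smul_sub, smul_smul, mul_neg, mul_inv_cancel₀ hci,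
          neg_one_smul, sub_neg_eq_add]

theorem exists_norm_sum_smul_eq_infDist_span {𝕜 E ι : Type*} [RCLike 𝕜] [NormedAddCommGroup E]
    [NormedSpace 𝕜 E] [FiniteDimensional 𝕜 E] [Fintype ι] (v : ι → E) (i : ι) :
    ∃ c : ι → 𝕜, c i = 1 ∧
      ‖∑ j, c j • v j‖ = infDist (v i) (Submodule.span 𝕜 (v '' {j | j ≠ i})) := by
  classical
  set S := Submodule.span 𝕜 (v '' {j | j ≠ i})
  have := FiniteDimensional.proper_rclike 𝕜 E
  obtain ⟨y, hyS, hy⟩ :=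
    S.closed_of_finiteDimensional.exists_infDist_eq_dist ⟨0, S.zero_mem⟩ (v i)
  obtain ⟨l, hl, rfl⟩ := (Finsupp.mem_span_image_iff_linearCombination 𝕜).1 hyS
  have hli : l i = 0 := (Finsupp.mem_supported' 𝕜 l).1 hl i (by simp)
  refine ⟨⇑(Finsupp.single i 1 - l : ι →₀ 𝕜), by simp [hli], ?_⟩
  rw [hy, dist_eq_norm]
  simp [sub_smul, Finset.sum_sub_distrib, Finsupp.single_apply, Finsupp.linearCombination_apply,
    Finsupp.sum_fintype]

theorem EuclideanSpace.exists_inv_sqrt_card_mul_norm_le_norm_apply {𝕜 ι : Type*} [RCLike 𝕜]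
    [Fintype ι] [Nonempty ι] (x : EuclideanSpace 𝕜 ι) :
    ∃ i, (√(Fintype.card ι))⁻¹ * ‖x‖ ≤ ‖x i‖ := by
  obtain ⟨i, hi⟩ := Finite.exists_max fun j => ‖x j‖
  refine ⟨i, ?_⟩
  have hsq : ‖x‖ ^ 2 ≤ (√(Fintype.card ι) * ‖x i‖) ^ 2 := by
    rw [EuclideanSpace.norm_sq_eq, mul_pow, Real.sq_sqrt (Nat.cast_nonneg _)]
    simpa using Finset.sum_le_card_nsmul Finset.univ (fun j => ‖x j‖ ^ 2) _
      fun j _ => pow_le_pow_left₀ (norm_nonneg _) (hi j) 2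
  rw [inv_mul_le_iff₀ (by positivity)]
  exact (pow_le_pow_iff_left₀ (norm_nonneg _) (by positivity) two_ne_zero).1 hsq

namespace Matrix

section Rayleigh

variable {𝕜 ι : Type*} [RCLike 𝕜] [Fintype ι] [DecidableEq ι] {H : Matrix ι ι 𝕜}
  (hH : H.IsHermitian)

theorem IsHermitian.re_inner_toEuclideanLin_self_eq_sum (x : EuclideanSpace 𝕜 ι) :
    RCLike.re (inner 𝕜 x (toEuclideanLin H x)) =
      ∑ j, hH.eigenvalues j * ‖inner 𝕜 (hH.eigenvectorBasis j) x‖ ^ 2 := by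
  set b := hH.eigenvectorBasis
  have hb : ∀ j, toEuclideanLin H (b j) = (hH.eigenvalues j : 𝕜) • b j := fun j => by
    rw [toLpLin_apply, hH.mulVec_eigenvectorBasis, ← RCLike.real_smul_eq_coe_smul]
    rfl
  rw [← b.sum_inner_mul_inner, map_sum]
  refine Finset.sum_congr rfl fun j _ => ?_
  rw [← isSymmetric_toEuclideanLin_iff.2 hH, hb, inner_smul_left, RCLike.conj_ofReal,
    ← inner_conj_symm x, mul_left_comm, RCLike.conj_mul]
  norm_cast

theorem IsHermitian.mul_norm_sq_le_re_inner_toEuclideanLin_self {c : ℝ}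
    (hc : ∀ j, c ≤ hH.eigenvalues j) (x : EuclideanSpace 𝕜 ι) :
    c * ‖x‖ ^ 2 ≤ RCLike.re (inner 𝕜 x (toEuclideanLin H x)) := by
  rw [hH.re_inner_toEuclideanLin_self_eq_sum, ← hH.eigenvectorBasis.sum_sq_norm_inner_right x,
    Finset.mul_sum]
  gcongr with j
  exact hc j

theorem IsHermitian.re_inner_toEuclideanLin_eigenvectorBasis (j : ι) :
    RCLike.re (inner 𝕜 (hH.eigenvectorBasis j) (toEuclideanLin H (hH.eigenvectorBasis j))) =
      hH.eigenvalues j := by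
  rw [hH.eigenvalues_eq j, EuclideanSpace.inner_eq_star_dotProduct, dotProduct_comm]
  rfl

end Rayleigh

theorem norm_toEuclideanLin_conjTranspose_sq {𝕜 m ι : Type*} [RCLike 𝕜] [Fintype m]
    [DecidableEq m] [Fintype ι] (A : Matrix m ι 𝕜) (x : EuclideanSpace 𝕜 m) :
    ‖toEuclideanLin Aᴴ x‖ ^ 2 = RCLike.re (inner 𝕜 x (toEuclideanLin (A * Aᴴ) x)) := by
  classical
  have hmul : toEuclideanLin (A * Aᴴ) x = toEuclideanLin A (toEuclideanLin Aᴴ x) := by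
    simp only [toLpLin_apply, mulVec_mulVec]
  rw [hmul, ← LinearMap.adjoint_inner_left, ← toEuclideanLin_conjTranspose_eq_adjoint,
    inner_self_eq_norm_sq]

end Matrix

section SmallestSingularValue

variable {n : ℕ} (A : Matrix (Fin n) (Fin n) ℂ)

theorem sv_nonneg (k : ℕ) : 0 ≤ sv A k := by
  unfold sv sdesc singVals
  split_ifs
  exacts [Real.sqrt_nonneg _, le_rfl]

theorem exists_sv_last_eq_sqrt_min_eigenvalue (hn : 0 < n) :
    ∃ i₀, sv A (n - 1) = √((isHermitian_mul_conjTranspose_self A).eigenvalues i₀) ∧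
      ∀ j, (isHermitian_mul_conjTranspose_self A).eigenvalues i₀ ≤
        (isHermitian_mul_conjTranspose_self A).eigenvalues j := by
  have hlast : n - 1 < n := Nat.sub_lt hn one_pos
  have hrev : (⟨n - 1, hlast⟩ : Fin n).rev = ⟨0, hn⟩ := by ext; simp [Fin.val_rev]; omega
  refine ⟨Tuple.sort (singVals A) ⟨0, hn⟩, by simp [sv, sdesc, hlast, hrev, singVals], fun j => ?_⟩
  have hmin : singVals A (Tuple.sort (singVals A) ⟨0, hn⟩) ≤ singVals A j := by
    simpa using Tuple.monotone_sort (singVals A)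
      (a := ⟨0, hn⟩) (b := (Tuple.sort (singVals A)).symm j) (by simp [Fin.le_def])
  exact (Real.sqrt_le_sqrt_iff (eigenvalues_self_mul_conjTranspose_nonneg A j)).1 hmin

theorem sv_last_mul_norm_le (hn : 0 < n) (x : EuclideanSpace ℂ (Fin n)) :
    sv A (n - 1) * ‖x‖ ≤ ‖toEuclideanLin Aᴴ x‖ := by
  obtain ⟨i₀, hsv, hmin⟩ := exists_sv_last_eq_sqrt_min_eigenvalue A hn
  have hsq := (isHermitian_mul_conjTranspose_self A).mul_norm_sq_le_re_inner_toEuclideanLin_self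
    hmin x
  rw [← norm_toEuclideanLin_conjTranspose_sq] at hsq
  rw [hsv, ← Real.sqrt_sq (norm_nonneg x), ← Real.sqrt_sq (norm_nonneg (toEuclideanLin Aᴴ x)),
    ← Real.sqrt_mul (eigenvalues_self_mul_conjTranspose_nonneg A i₀)]
  exact Real.sqrt_le_sqrt hsq

theorem exists_norm_eq_one_norm_toEuclideanLin_conjTranspose_eq_sv_last (hn : 0 < n) :
    ∃ x : EuclideanSpace ℂ (Fin n), ‖x‖ = 1 ∧ ‖toEuclideanLin Aᴴ x‖ = sv A (n - 1) := by
  obtain ⟨i₀, hsv, -⟩ := exists_sv_last_eq_sqrt_min_eigenvalue A hn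
  set hH := isHermitian_mul_conjTranspose_self A
  refine ⟨hH.eigenvectorBasis i₀, hH.eigenvectorBasis.orthonormal.1 i₀, ?_⟩
  rw [hsv, ← hH.re_inner_toEuclideanLin_eigenvectorBasis, ← norm_toEuclideanLin_conjTranspose_sq,
    Real.sqrt_sq (norm_nonneg _)]

theorem norm_sum_star_smul_rowE (x : EuclideanSpace ℂ (Fin n)) :
    ‖∑ j, star (x j) • rowE A j‖ = ‖toEuclideanLin Aᴴ x‖ := by
  have hk : ∀ k, (∑ j, star (x j) • rowE A j) k = star (toEuclideanLin Aᴴ x k) := fun k => by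
    simp [rowE, toLpLin_apply, mulVec, dotProduct, mul_comm]
  simp only [EuclideanSpace.norm_eq, hk, norm_star]

end SmallestSingularValue

/-- Rudelson–Vershynin row bound:
`n^{-1/2} min_i dist(Rᵢ, R₋ᵢ) ≤ sₙ(A) ≤ min_i dist(Rᵢ, R₋ᵢ)`. -/
theorem rudelson_vershynin_row_bound {n : ℕ} (A : Matrix (Fin n) (Fin n) ℂ) :
    (Real.sqrt n)⁻¹ * (⨅ i : Fin n, distRow A i) ≤ sv A (n - 1) ∧
    sv A (n - 1) ≤ ⨅ i : Fin n, distRow A i := by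
  rcases Nat.eq_zero_or_pos n with rfl | hn
  · simp [sv]
  have : Nonempty (Fin n) := ⟨⟨0, hn⟩⟩
  have hdist : ∀ i, 0 ≤ distRow A i := fun i => infDist_nonneg
  constructor
  · obtain ⟨x, hx, hxs⟩ := exists_norm_eq_one_norm_toEuclideanLin_conjTranspose_eq_sv_last A hn
    obtain ⟨i, hi⟩ := EuclideanSpace.exists_inv_sqrt_card_mul_norm_le_norm_apply x
    rw [hx, mul_one, Fintype.card_fin] at hi
    calc (√n)⁻¹ * ⨅ i, distRow A i ≤ ‖star (x i)‖ * distRow A i := by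
          rw [norm_star]
          exact mul_le_mul hi (ciInf_le ⟨0, Set.forall_mem_range.2 hdist⟩ i) (le_ciInf hdist)
            (norm_nonneg _)
      _ ≤ ‖∑ j, star (x j) • rowE A j‖ :=
          norm_mul_infDist_span_le_norm_sum_smul (rowE A) (fun j => star (x j)) i
      _ = sv A (n - 1) := by rw [norm_sum_star_smul_rowE, hxs]
  · refine le_ciInf fun i => ?_
    obtain ⟨c, hci, hc⟩ := exists_norm_sum_smul_eq_infDist_span (𝕜 := ℂ) (rowE A) i
    set x : EuclideanSpace ℂ (Fin n) := WithLp.toLp 2 (star c)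
    have hx : 1 ≤ ‖x‖ := by simpa [x, hci] using PiLp.norm_apply_le x i
    calc sv A (n - 1) ≤ sv A (n - 1) * ‖x‖ := le_mul_of_one_le_right (sv_nonneg A _) hx
      _ ≤ ‖toEuclideanLin Aᴴ x‖ := sv_last_mul_norm_le A hn x
      _ = distRow A i := by rw [← norm_sum_star_smul_rowE, distRow, ← hc]; simp [x]
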